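/- arXiv:1401.0845 — 5 statements merged into one kernel-verified Lean document; each statement's English description precedes it below -/
import Mathlib

section
/- For all n ≥ 4, the identity C(n,0)·(2^(n-2) − 1) + (Σ_{k=1}^{n-2} C(n,k)·2^(n-k-2)) + C(n,n-1) + C(n,n) = ((n+3)/2)·Cₙ − 1 holds, where C(n,k) is the Catalan triangle entry and Cₙ the n-th Catalan number. -/
/-- The `(n,k)` entry of Catalan's triangle, in closed form. -/
def catalanTriangle (n k : ℕ) : ℕ :=
  (n + k).factorial * (n - k + 1) / (k.factorial * (n + 1).factorial)

/-- The `n`-th Catalan number `Cₙ = binomial(2n, n) / (n+1)`. -/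
def catalanNumber (n : ℕ) : ℕ := Nat.choose (2 * n) n / (n + 1)

/-- Integer-valued Catalan triangle as a difference of binomial coefficients. -/
private def Tz (n k : ℕ) : ℤ :=
  match k with
  | 0 => 1
  | k + 1 => ((n + (k + 1)).choose (k + 1) : ℤ) - ((n + (k + 1)).choose k : ℤ)

private lemma tz_key (n k : ℕ) (h : k ≤ n) :
    Tz n k * ((k.factorial * (n + 1).factorial : ℕ) : ℤ)
      = (((n + k).factorial * (n - k + 1) : ℕ) : ℤ) := by
  match k with
  | 0 =>
    simp only [Tz, Nat.factorial_zero, Nat.add_zero, Nat.sub_zero, Nat.factorial_succ]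
    push_cast
    ring
  | k + 1 =>
    have h1 : (n + (k+1)).choose (k+1) * (k+1).factorial * n.factorial
        = (n + (k+1)).factorial := by
      have := Nat.choose_mul_factorial_mul_factorial (show k + 1 ≤ n + (k+1) by omega)
      rwa [Nat.add_sub_cancel] at this
    have h2 : (n + (k+1)).choose k * k.factorial * (n+1).factorial
        = (n + (k+1)).factorial := by
      have := Nat.choose_mul_factorial_mul_factorial (show k ≤ n + (k+1) by omega)
      rwa [show n + (k+1) - k = n + 1 by omega] at this
    have h1' := congrArg (Nat.cast : ℕ → ℤ) h1
    have h2' := congrArg (Nat.cast : ℕ → ℤ) h2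
    have hsub : n - (k+1) + 1 = n - k := by omega
    rw [hsub]
    simp only [Tz]
    push_cast [Nat.factorial_succ, Nat.cast_sub (show k ≤ n by omega)] at h1' h2' ⊢
    linear_combination ((n : ℤ) + 1) * h1' - ((k : ℤ) + 1) * h2'

private lemma ct_cast (n k : ℕ) (h : k ≤ n) : (catalanTriangle n k : ℤ) = Tz n k := by
  have hd : 0 < k.factorial * (n+1).factorial :=
    Nat.mul_pos (Nat.factorial_pos _) (Nat.factorial_pos _)
  have key := tz_key n k h
  have hnn : 0 ≤ Tz n k := by
    by_contra hlt
    push_neg at hlt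
    have hdz : (0:ℤ) < ((k.factorial * (n+1).factorial : ℕ) : ℤ) := by exact_mod_cast hd
    have hpos : (0:ℤ) ≤ (((n + k).factorial * (n - k + 1) : ℕ) : ℤ) := by positivity
    nlinarith
  obtain ⟨t, ht⟩ := Int.eq_ofNat_of_zero_le hnn
  have hnat : (n+k).factorial * (n-k+1) = t * (k.factorial * (n+1).factorial) := by
    have h' := key
    rw [ht] at h'
    exact_mod_cast h'.symm
  unfold catalanTriangle
  rw [Nat.div_eq_of_eq_mul_left hd hnat, ht]

private lemma sum_tz (n j : ℕ) :
    ∑ k ∈ Finset.range (j + 1), (2:ℤ) ^ (j - k) * Tz n k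
      = ((n + j + 1).choose j : ℤ) := by
  induction j with
  | zero => simp [Tz]
  | succ j ih =>
    rw [Finset.sum_range_succ]
    have hstep : ∑ k ∈ Finset.range (j+1), (2:ℤ)^(j+1-k) * Tz n k
        = 2 * ∑ k ∈ Finset.range (j+1), (2:ℤ)^(j-k) * Tz n k := by
      rw [Finset.mul_sum]
      refine Finset.sum_congr rfl fun k hk => ?_
      have hk' : k ≤ j := Nat.lt_succ_iff.mp (Finset.mem_range.mp hk)
      rw [show j + 1 - k = (j - k) + 1 by omega, pow_succ]
      ring
    rw [hstep, ih]
    simp only [Tz, Nat.sub_self, pow_zero, one_mul]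
    have hpas : (n + (j+1) + 1).choose (j+1)
        = (n + j + 1).choose j + (n + j + 1).choose (j+1) := by
      have hp := Nat.choose_succ_succ' (n + j + 1) j
      rw [show n + (j+1) + 1 = n + j + 1 + 1 by omega]
      exact hp
    rw [hpas, show n + (j + 1) = n + j + 1 by omega]
    push_cast
    ring

private lemma choose_eq_mul_catalan (n : ℕ) :
    (2 * n + 1).choose n = (2 * n + 1) * catalan n := by
  have h1 : (2*n + 1) * (2*n).choose n = (2*n+1).choose (n+1) * (n+1) :=
    Nat.add_one_mul_choose_eq (2*n) n
  rw [Nat.choose_symm_half] at h1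
  have h2 : (n + 1) * catalan n = (2*n).choose n := by
    rw [succ_mul_catalan_eq_centralBinom, Nat.centralBinom_eq_two_mul_choose]
  have h3 : (2*n+1).choose n * (n+1) = ((2*n+1) * catalan n) * (n+1) := by
    calc (2*n+1).choose n * (n+1) = (2*n + 1) * (2*n).choose n := h1.symm
      _ = (2*n+1) * ((n+1) * catalan n) := by rw [h2]
      _ = ((2*n+1) * catalan n) * (n+1) := by ring
  exact Nat.eq_of_mul_eq_mul_right (Nat.succ_pos n) h3

private lemma tz_nn (n : ℕ) (hn : 1 ≤ n) :
    ((n:ℤ) + 1) * Tz n n = ((2*n).choose n : ℤ) := by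
  obtain ⟨m, rfl⟩ := Nat.exists_eq_add_of_le hn
  have hA : (2*(1+m)).choose (1+m) * (1+m).factorial * (1+m).factorial
      = (2*(1+m)).factorial := by
    have := Nat.choose_mul_factorial_mul_factorial (show 1+m ≤ 2*(1+m) by omega)
    rwa [show 2*(1+m) - (1+m) = 1+m by omega] at this
  have hB : (2*(1+m)).choose m * m.factorial * (m+2).factorial
      = (2*(1+m)).factorial := by
    have := Nat.choose_mul_factorial_mul_factorial (show m ≤ 2*(1+m) by omega)
    rwa [show 2*(1+m) - m = m+2 by omega] at this
  have hA' := congrArg (Nat.cast : ℕ → ℤ) hA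
  have hB' := congrArg (Nat.cast : ℕ → ℤ) hB
  have hTz : Tz (1+m) (1+m) = ((2*(1+m)).choose (1+m) : ℤ) - ((2*(1+m)).choose m : ℤ) := by
    rw [show (1:ℕ) + m = m + 1 by omega]
    show ((m+1 + (m + 1)).choose (m + 1) : ℤ) - ((m+1 + (m + 1)).choose m : ℤ) = _
    rw [show m + 1 + (m+1) = 2*(m+1) by omega]
  rw [hTz]
  have hfac : ((m.factorial * (m+1).factorial : ℕ) : ℤ) ≠ 0 := by
    have hp : 0 < m.factorial * (m+1).factorial :=
      Nat.mul_pos (Nat.factorial_pos _) (Nat.factorial_pos _)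
    exact_mod_cast hp.ne'
  apply mul_right_cancel₀ hfac
  rw [show (1:ℕ) + m = m + 1 by omega] at hA' hB' ⊢
  push_cast [Nat.factorial_succ] at hA' hB' ⊢
  linear_combination hA' - hB'

private lemma tz_eq_catalan (n : ℕ) (hn : 1 ≤ n) : Tz n n = (catalan n : ℤ) := by
  have h2 := tz_nn n hn
  have h3 : (n + 1) * catalan n = (2*n).choose n := by
    rw [succ_mul_catalan_eq_centralBinom, Nat.centralBinom_eq_two_mul_choose]
  have h3' := congrArg (Nat.cast : ℕ → ℤ) h3
  push_cast at h3'
  have hne : ((n:ℤ) + 1) ≠ 0 := by positivity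
  apply mul_left_cancel₀ hne
  rw [h2, ← h3']

private lemma tz_pred (n : ℕ) (hn : 2 ≤ n) : Tz n (n-1) = Tz n n := by
  obtain ⟨m, rfl⟩ := Nat.exists_eq_add_of_le hn
  have e1 : (2:ℕ) + m = (m+1) + 1 := by omega
  rw [show (2:ℕ) + m - 1 = m + 1 by omega, e1]
  show ((m+1+1 + (m+1)).choose (m+1) : ℤ) - ((m+1+1 + (m+1)).choose m : ℤ)
      = ((m+1+1 + (m+1+1)).choose (m+1+1) : ℤ) - ((m+1+1 + (m+1+1)).choose (m+1) : ℤ)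
  rw [show m+1+1 + (m+1) = 2*(m+1)+1 by omega,
      show m+1+1 + (m+1+1) = 2*(m+1)+1+1 by omega]
  have hp1 : (2*(m+1)+1+1).choose (m+1+1)
      = (2*(m+1)+1).choose (m+1) + (2*(m+1)+1).choose (m+1+1) :=
    Nat.choose_succ_succ' (2*(m+1)+1) (m+1)
  have hp2 : (2*(m+1)+1+1).choose (m+1)
      = (2*(m+1)+1).choose m + (2*(m+1)+1).choose (m+1) :=
    Nat.choose_succ_succ' (2*(m+1)+1) m
  have hs : (2*(m+1)+1).choose (m+1+1) = (2*(m+1)+1).choose (m+1) :=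
    Nat.choose_symm_half (m+1)
  rw [hp1, hp2, hs]
  push_cast
  ring

private lemma ct_zero (n : ℕ) : catalanTriangle n 0 = 1 := by
  have h := ct_cast n 0 (Nat.zero_le n)
  have : Tz n 0 = 1 := rfl
  rw [this] at h
  exact_mod_cast h

private lemma ct_nn (n : ℕ) (hn : 1 ≤ n) : catalanTriangle n n = catalan n := by
  have h := ct_cast n n le_rfl
  rw [tz_eq_catalan n hn] at h
  exact_mod_cast h

private lemma ct_pred (n : ℕ) (hn : 2 ≤ n) : catalanTriangle n (n-1) = catalan n := by
  have h := ct_cast n (n-1) (by omega)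
  rw [tz_pred n hn, tz_eq_catalan n (by omega)] at h
  exact_mod_cast h

/-- For `n ≥ 4`,
`C(n,0)·(2^(n-2) − 1) + Σ_{k=1}^{n-2} C(n,k)·2^(n-k-2) + C(n,n-1) + C(n,n) = ((n+3)/2)·Cₙ − 1`. -/
theorem packet_identity (n : ℕ) (hn : 4 ≤ n) :
    catalanTriangle n 0 * (2 ^ (n - 2) - 1) +
      (∑ k ∈ Finset.Icc 1 (n - 2), catalanTriangle n k * 2 ^ (n - k - 2)) +
      catalanTriangle n (n - 1) + catalanTriangle n n =
    (n + 3) * catalanNumber n / 2 - 1 := by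
  set A := ∑ k ∈ Finset.Icc 1 (n - 2), catalanTriangle n k * 2 ^ (n - k - 2) with hA
  have hF := sum_tz n n
  rw [show n + n + 1 = 2*n + 1 by ring, choose_eq_mul_catalan n] at hF
  have hsplit : ∑ k ∈ Finset.range (n + 1), (2:ℤ) ^ (n - k) * Tz n k
      = (∑ k ∈ Finset.range (n-1), (2:ℤ) ^ (n - k) * Tz n k)
        + 2 * Tz n (n-1) + Tz n n := by
    rw [show n + 1 = (n-1) + 1 + 1 by omega, Finset.sum_range_succ, Finset.sum_range_succ]
    rw [show (n-1) + 1 = n by omega, Nat.sub_self, show n - (n-1) = 1 by omega,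
      pow_zero, pow_one]
    ring
  have hmid : ∑ k ∈ Finset.range (n-1), (2:ℤ) ^ (n - k) * Tz n k
      = 2^n + 4 * (A : ℤ) := by
    rw [show n - 1 = (n-2) + 1 by omega, Finset.sum_range_succ']
    have h0 : Tz n 0 = 1 := rfl
    rw [h0, Nat.sub_zero, mul_one]
    have hAcast : (A : ℤ) = ∑ k ∈ Finset.range (n-2),
        (catalanTriangle n (1 + k) : ℤ) * 2 ^ (n - (1 + k) - 2) := by
      rw [hA]
      push_cast
      rw [show Finset.Icc 1 (n-2) = Finset.Ico 1 (n-2+1) by rw [Finset.Ico_add_one_right_eq_Icc],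
        Finset.sum_Ico_eq_sum_range]
      exact Finset.sum_congr rfl fun k _ => rfl
    rw [add_comm, hAcast, Finset.mul_sum]
    congr 1
    refine Finset.sum_congr rfl fun k hk => ?_
    have hk' : k < n - 2 := Finset.mem_range.mp hk
    have hct := ct_cast n (k+1) (by omega)
    rw [show (1:ℕ) + k = k + 1 by omega, hct]
    have e : n - (k+1) = (n - (k+1) - 2) + 2 := by omega
    have hpw : (2:ℤ) ^ (n - (k+1)) = 2 ^ (n - (k+1) - 2) * 4 := by
      calc (2:ℤ) ^ (n - (k+1)) = 2 ^ ((n - (k+1) - 2) + 2) := by rw [← e]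
        _ = 2 ^ (n - (k+1) - 2) * 4 := by rw [pow_add]; norm_num
    rw [hpw]
    ring
  rw [hsplit, hmid, tz_pred n (by omega), tz_eq_catalan n (by omega)] at hF
  have hCN : catalanNumber n = catalan n := by
    rw [catalan_eq_centralBinom_div, Nat.centralBinom_eq_two_mul_choose]
    rfl
  rw [ct_zero, one_mul, ct_pred n (by omega), ct_nn n (by omega), hCN]
  have h1le : (1:ℕ) ≤ 2^(n-2) := Nat.one_le_two_pow
  have h2 : (n+3) * catalan n
      = 2 * ((2^(n-2) - 1) + A + catalan n + catalan n + 1) := by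
    zify [h1le]
    have hp : (2:ℤ)^n = 2^(n-2) * 2^2 := by
      rw [← pow_add]
      congr 1
      omega
    rw [hp] at hF
    push_cast at hF
    linarith
  rw [h2, Nat.mul_div_cancel_left _ (by norm_num : 0 < 2), Nat.add_sub_cancel]
end

section
/- In a simply-laced Coxeter group, an element w is fully commutative (any reduced word for w can be obtained from any other by interchanges of adjacent commuting generators) if and only if no reduced word for w contains a subword of the form [i, j, i] where the generators sᵢ and sⱼ do not commute. -/
/-- Two words are related by a commutation move: interchanging two adjacent letters `i, j`
whose generators commute (`M i j = 2`). -/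
def CommMove {B : Type*} (M : CoxeterMatrix B) (w v : List B) : Prop :=
  ∃ (a b : List B) (i j : B), M i j = 2 ∧ w = a ++ i :: j :: b ∧ v = a ++ j :: i :: b

/-- An element `w` of a Coxeter group is fully commutative if any reduced word for `w` can
be obtained from any other by a sequence of interchanges of adjacent commuting generators. -/
def FullyCommutative {B W : Type*} [Group W] {M : CoxeterMatrix B}
    (cs : CoxeterSystem M W) (w : W) : Prop :=
  ∀ u v : List B, cs.IsReduced u → cs.IsReduced v →
    cs.wordProd u = w → cs.wordProd v = w → Relation.ReflTransGen (CommMove M) u v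


/-!
The engine is the exchange condition. `W` acts on `W × ZMod 2` by
`sᵢ • (t, z) = (sᵢ t sᵢ, z + [t = sᵢ])`; checking the Coxeter relations for this action shows that
the parity of the number of occurrences of a reflection in the left inversion sequence of a word
depends only on the product of the word. Hence `sᵢ` is a left descent of `π ω` iff it occurs an
odd number of times in the left inversion sequence of `ω`, and deleting the corresponding letter
of `ω` gives a word for `sᵢ π ω`.

If a reduced word of `w` contains `i j i` with `m(i, j) = 3`, the braid move `i j i ↦ j i j`
produces another reduced word with fewer letters `i`, while commutation moves preserve letter
counts. Conversely, let `u = i u'` and `v = j v'` be reduced words of `w` with `i ≠ j`. Then `sᵢ`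
and `sⱼ` are left descents of `w`, and exchange gives a reduced word `i j t`. If `m(i, j) = 2`,
then `j i t` is reduced as well and induction on the length links `u ~ i j t ~ j i t ~ v`. If
`m(i, j) = 3`, exchanging `sⱼ` into `i j t` produces a reduced word `i j i r`. That `sᵢ ≠ sⱼ` for
`i ≠ j` is read off the action on the root lattice given by the Cartan matrix.
-/

namespace CommMove

variable {B : Type*} {M : CoxeterMatrix B} {u v : List B}

theorem symm (h : CommMove M u v) : CommMove M v u := by
  obtain ⟨a, b, i, j, hM, rfl, rfl⟩ := h
  exact ⟨a, b, j, i, M.symmetric j i ▸ hM, rfl, rfl⟩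

instance : Std.Symm (CommMove M) := ⟨fun _ _ h => h.symm⟩

theorem cons (h : CommMove M u v) (c : B) : CommMove M (c :: u) (c :: v) := by
  obtain ⟨a, b, i, j, hM, rfl, rfl⟩ := h
  exact ⟨c :: a, b, i, j, hM, rfl, rfl⟩

theorem perm (h : CommMove M u v) : u.Perm v := by
  obtain ⟨a, b, i, j, -, rfl, rfl⟩ := h
  exact (List.Perm.swap j i b).append_left a

theorem reflTransGen_cons (h : Relation.ReflTransGen (CommMove M) u v) (c : B) :
    Relation.ReflTransGen (CommMove M) (c :: u) (c :: v) :=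
  Relation.ReflTransGen.lift (c :: ·) (fun _ _ h => h.cons c) _ _ h

theorem perm_of_reflTransGen (h : Relation.ReflTransGen (CommMove M) u v) : u.Perm v := by
  induction h with
  | refl => rfl
  | tail _ hm ih => exact ih.trans hm.perm

end CommMove

theorem List.mem_of_cast_count_eq_one {α : Type*} [BEq α] [LawfulBEq α] {l : List α} {a : α}
    (h : (l.count a : ZMod 2) = 1) : a ∈ l :=
  List.count_pos_iff.mp (Nat.pos_of_ne_zero fun h0 => by simp [h0] at h)

theorem mul_mul_inv_eq_iff {G : Type*} [Group G] (g t y : G) :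
    g * t * g⁻¹ = y ↔ t = g⁻¹ * y * g := by
  constructor <;> rintro rfl <;> group

namespace CoxeterMatrix

variable {B : Type*} (M : CoxeterMatrix B)

def IsSimplyLaced : Prop := ∀ i j : B, i ≠ j → M i j = 2 ∨ M i j = 3

/-- `-2 cos (π / M a b)` when `M a b ∈ {1, 2, 3}` (and `0` for larger bonds). -/
def cartan (a b : B) : ℤ := if M a b = 1 then 2 else if M a b = 3 then -1 else 0

noncomputable def cartanForm (a : B) : (B →₀ ℤ) →ₗ[ℤ] ℤ :=
  Finsupp.linearCombination ℤ (M.cartan a)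

noncomputable def simpleReflection (a : B) : Module.End ℤ (B →₀ ℤ) :=
  LinearMap.id - (M.cartanForm a).smulRight (Finsupp.single a 1)

variable {M}

theorem cartanForm_single (a b : B) : M.cartanForm a (Finsupp.single b 1) = M.cartan a b := by
  simp [cartanForm]

theorem cartanForm_single_self (a : B) : M.cartanForm a (Finsupp.single a 1) = 2 := by
  simp [cartanForm_single, cartan]

theorem cartanForm_single_of_eq_two {a b : B} (h : M a b = 2) :
    M.cartanForm a (Finsupp.single b 1) = 0 := by
  simp [cartanForm_single, cartan, h]

theorem cartanForm_single_of_eq_three {a b : B} (h : M a b = 3) :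
    M.cartanForm a (Finsupp.single b 1) = -1 := by
  simp [cartanForm_single, cartan, h]

theorem simpleReflection_apply (a : B) (x : B →₀ ℤ) :
    M.simpleReflection a x = x - M.cartanForm a x • Finsupp.single a 1 :=
  rfl

theorem isLiftable_simpleReflection (hsl : M.IsSimplyLaced) :
    M.IsLiftable M.simpleReflection := by
  intro i j
  rcases eq_or_ne i j with rfl | hij
  · rw [M.diagonal, pow_one]
    refine LinearMap.ext fun x => ?_
    simp only [Module.End.mul_apply, simpleReflection_apply, map_sub, map_smul,
      cartanForm_single_self, Module.End.one_apply]
    module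
  rcases hsl i j hij with h | h <;> rw [h] <;> refine LinearMap.ext fun x => ?_ <;>
    simp only [pow_succ, pow_zero, one_mul, Module.End.mul_apply, simpleReflection_apply, map_sub,
      map_smul, cartanForm_single_self, cartanForm_single_of_eq_two, cartanForm_single_of_eq_three,
      h, M.symmetric j i, Module.End.one_apply] <;>
    module

end CoxeterMatrix

namespace CoxeterSystem

open List

section ParityPerm

open scoped Classical

variable {G : Type*} [Group G]

noncomputable def parityPerm (s : G) : Equiv.Perm (G × ZMod 2) :=
  Equiv.prodShear (MulAut.conj s).toEquiv fun t => Equiv.addRight (if t = s then 1 else 0)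

theorem parityPerm_apply (s t : G) (z : ZMod 2) :
    parityPerm s (t, z) = (s * t * s⁻¹, z + if t = s then 1 else 0) :=
  rfl

theorem parityPerm_mul_pow_apply {a b : G} (ha : a⁻¹ = a) (hb : b⁻¹ = b) (n : ℕ) (t : G)
    (z : ZMod 2) :
    ((parityPerm a * parityPerm b) ^ n) (t, z) =
      ((a * b) ^ n * t * ((a * b) ^ n)⁻¹,
        z + ∑ k ∈ Finset.range (2 * n), if t = (b * a) ^ k * b then 1 else 0) := by
  induction n generalizing t z with
  | zero => simp
  | succ n ih =>
    have hstep : (parityPerm a * parityPerm b) (t, z) =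
        (a * b * t * (a * b)⁻¹, z + (if t = b then 1 else 0) + if t = b * a * b then 1 else 0) := by
      rw [Equiv.Perm.mul_apply, parityPerm_apply, parityPerm_apply, mul_mul_inv_eq_iff _ t]
      exact Prod.ext (by group) (by rw [hb])
    have hterm (k : ℕ) : (if a * b * t * (a * b)⁻¹ = (b * a) ^ k * b then (1 : ZMod 2) else 0) =
        if t = (b * a) ^ (k + 1 + 1) * b then 1 else 0 := by
      rw [mul_mul_inv_eq_iff, mul_inv_rev, ha, hb, pow_succ', pow_succ]
      simp only [mul_assoc]
    rw [pow_succ, Equiv.Perm.mul_apply, hstep, ih]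
    refine Prod.ext ?_ ?_
    · simp only [pow_succ, mul_inv_rev, mul_assoc]
    · rw [mul_add 2 n 1, Finset.sum_range_succ', Finset.sum_range_succ']
      simp only [hterm, pow_zero, one_mul, pow_one, zero_add]
      abel

end ParityPerm

variable {B W : Type*} [Group W] {M : CoxeterMatrix B} (cs : CoxeterSystem M W)

local prefix:100 "s " => cs.simple
local prefix:100 "π " => cs.wordProd
local prefix:100 "ℓ " => cs.length
local prefix:100 "lis " => cs.leftInvSeq

section Exchange

open scoped Classical

theorem isLiftable_parityPerm : M.IsLiftable fun i => parityPerm (s i) := by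
  intro i j
  ext ⟨t, z⟩ : 1
  rw [parityPerm_mul_pow_apply (cs.inv_simple i) (cs.inv_simple j), cs.simple_mul_simple_pow,
    two_mul, Finset.sum_range_add]
  simp [pow_add, cs.simple_mul_simple_pow', CharTwo.add_self_eq_zero]

noncomputable def parityRep : W →* Equiv.Perm (W × ZMod 2) :=
  cs.lift ⟨_, cs.isLiftable_parityPerm⟩

theorem parityRep_simple (i : B) : cs.parityRep (s i) = parityPerm (s i) :=
  cs.lift_apply_simple cs.isLiftable_parityPerm i

theorem count_map_conj_simple (L : List W) (i : B) (t : W) :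
    (L.map (MulAut.conj (s i))).count t = L.count (s i * t * (s i)⁻¹) := by
  conv_lhs => rw [show t = MulAut.conj (s i) (s i * t * (s i)⁻¹) by simp [mul_assoc]]
  exact count_map_of_injective _ _ (MulAut.conj _).injective _

theorem parityRep_inv_wordProd (ω : List B) (t : W) (z : ZMod 2) :
    cs.parityRep (π ω)⁻¹ (t, z) = ((π ω)⁻¹ * t * π ω, z + (lis ω).count t) := by
  induction ω generalizing t z with
  | nil => simp
  | cons i ω ih =>
    rw [wordProd_cons, mul_inv_rev, map_mul, Equiv.Perm.mul_apply, cs.inv_simple,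
      parityRep_simple, parityPerm_apply, ih, leftInvSeq, count_cons, count_map_conj_simple]
    refine Prod.ext (by rw [cs.inv_simple]; group) ?_
    simp only [beq_iff_eq, eq_comm (a := s i)]
    push_cast
    ring

theorem cast_count_leftInvSeq_eq {ω ω' : List B} (h : π ω = π ω') (t : W) :
    ((lis ω).count t : ZMod 2) = (lis ω').count t := by
  have h' := congrArg (fun w => (cs.parityRep w⁻¹ (t, 0)).2) h
  simpa only [parityRep_inv_wordProd, zero_add] using h'

theorem exists_eraseIdx_of_mem_leftInvSeq {ω : List B} {t : W} (ht : t ∈ lis ω) :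
    ∃ k < ω.length, t * π ω = π (ω.eraseIdx k) := by
  obtain ⟨k, hk, rfl⟩ := getElem_of_mem ht
  refine ⟨k, by simpa using hk, ?_⟩
  rw [← getD_leftInvSeq_mul_wordProd, getD_eq_getElem]

theorem isLeftDescent_of_cast_count_leftInvSeq {ω : List B} {i : B}
    (h : ((lis ω).count (s i) : ZMod 2) = 1) : cs.IsLeftDescent (π ω) i := by
  obtain ⟨ρ, hρ, hωρ⟩ := cs.exists_isReduced (π ω)
  rw [cs.cast_count_leftInvSeq_eq hωρ] at h
  obtain ⟨k, hk, hdel⟩ := cs.exists_eraseIdx_of_mem_leftInvSeq (mem_of_cast_count_eq_one h)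
  have hlen := length_eraseIdx_add_one hk
  rw [IsLeftDescent, hωρ, hdel, hρ.eq]
  exact (cs.length_wordProd_le _).trans_lt (by omega)

theorem isLeftDescent_iff_cast_count_leftInvSeq {ω : List B} {i : B} :
    cs.IsLeftDescent (π ω) i ↔ ((lis ω).count (s i) : ZMod 2) = 1 := by
  refine ⟨fun h => ?_, cs.isLeftDescent_of_cast_count_leftInvSeq⟩
  by_contra hne
  -- Otherwise `i` would also be a left descent of the shorter element `s i * π ω = π (i :: ω)`.
  have hcons : ((lis (i :: ω)).count (s i) : ZMod 2) = 1 := by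
    rw [leftInvSeq, count_cons, count_map_conj_simple, cs.inv_simple,
      cs.simple_mul_simple_self, one_mul]
    simp only [beq_self_eq_true, if_true, Nat.cast_add, Nat.cast_one]
    exact (by decide : ∀ x : ZMod 2, x ≠ 1 → x + 1 = 1) _ hne
  have := cs.isLeftDescent_of_cast_count_leftInvSeq hcons
  rw [wordProd_cons] at this
  exact cs.isLeftDescent_iff_not_isLeftDescent_mul.mp h this

theorem exists_eraseIdx_of_isLeftDescent {ω : List B} {i : B} (h : cs.IsLeftDescent (π ω) i) :
    ∃ k < ω.length, s i * π ω = π (ω.eraseIdx k) :=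
  cs.exists_eraseIdx_of_mem_leftInvSeq
    (mem_of_cast_count_eq_one (cs.isLeftDescent_iff_cast_count_leftInvSeq.mp h))

end Exchange

noncomputable def geometricRepresentation (hsl : M.IsSimplyLaced) :
    W →* Module.End ℤ (B →₀ ℤ) :=
  cs.lift ⟨M.simpleReflection, M.isLiftable_simpleReflection hsl⟩

theorem simple_injective (hsl : M.IsSimplyLaced) : Function.Injective cs.simple := by
  intro i j h
  by_contra hij
  have := congrArg (fun w => cs.geometricRepresentation hsl w (Finsupp.single i 1) i) h
  simp [geometricRepresentation, lift_apply_simple, CoxeterMatrix.simpleReflection_apply,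
    CoxeterMatrix.cartanForm_single_self, hij] at this

theorem simple_mul_simple_comm_of_eq_two {i j : B} (h : M i j = 2) : s i * s j = s j * s i := by
  simpa [braidWord, alternatingWord, wordProd_cons, h, M.symmetric j i] using
    cs.wordProd_braidWord_eq i j

theorem simple_braid_of_eq_three {i j : B} (h : M i j = 3) :
    s i * s j * s i = s j * s i * s j := by
  simpa [braidWord, alternatingWord, wordProd_cons, h, M.symmetric j i, mul_assoc] using
    (cs.wordProd_braidWord_eq i j).symm

theorem wordProd_eq_of_commMove {u v : List B} (h : CommMove M u v) : π u = π v := by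
  obtain ⟨a, b, i, j, hM, rfl, rfl⟩ := h
  simp only [wordProd_append, wordProd_cons, ← mul_assoc, cs.simple_mul_simple_comm_of_eq_two hM]

theorem isReduced_of_length_le {ω : List B} (h : ω.length ≤ ℓ (π ω)) : cs.IsReduced ω :=
  le_antisymm (cs.length_wordProd_le ω) h

theorem IsReduced.isLeftDescent_cons {cs : CoxeterSystem M W} {ω : List B} {i : B}
    (h : cs.IsReduced (i :: ω)) : cs.IsLeftDescent (cs.wordProd (i :: ω)) i := by
  rw [IsLeftDescent, wordProd_cons, simple_mul_simple_cancel_left, ← wordProd_cons, h.eq,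
    length_cons]
  exact Nat.lt_succ_of_le (cs.length_wordProd_le ω)

theorem isReduced_cons {ω : List B} {i : B} (hω : cs.IsReduced ω)
    (hi : ¬cs.IsLeftDescent (π ω) i) : cs.IsReduced (i :: ω) := by
  rw [IsReduced, wordProd_cons, cs.not_isLeftDescent_iff.mp hi, hω.eq, length_cons]

theorem exists_isReduced_cons_of_isLeftDescent {w : W} {i : B} (h : cs.IsLeftDescent w i) :
    ∃ ω, cs.IsReduced (i :: ω) ∧ π (i :: ω) = w := by
  obtain ⟨ω, hω, hωw⟩ := cs.exists_isReduced (s i * w)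
  refine ⟨ω, cs.isReduced_cons hω ?_, ?_⟩
  · rw [← hωw]
    exact cs.isLeftDescent_iff_not_isLeftDescent_mul.mp h
  · rw [wordProd_cons, ← hωw, simple_mul_simple_cancel_left]

theorem exists_isReduced_cons_cons_of_isLeftDescent {w : W} {i j : B} (hij : s i ≠ s j)
    (hi : cs.IsLeftDescent w i) (hj : cs.IsLeftDescent w j) :
    ∃ t, cs.IsReduced (i :: j :: t) ∧ π (i :: j :: t) = w := by
  obtain ⟨v, hv, rfl⟩ := cs.exists_isReduced_cons_of_isLeftDescent hj
  obtain ⟨_ | k, hk, hdel⟩ := cs.exists_eraseIdx_of_isLeftDescent hi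
  · rw [eraseIdx_cons_zero, wordProd_cons, ← mul_assoc, mul_eq_right, mul_eq_one_iff_eq_inv,
      inv_simple] at hdel
    exact absurd hdel hij
  · rw [eraseIdx_cons_succ] at hdel
    have hπ : π (i :: j :: v.eraseIdx k) = π (j :: v) := by
      rw [wordProd_cons, ← hdel, simple_mul_simple_cancel_left]
    have hlen := length_eraseIdx_add_one (Nat.lt_of_succ_lt_succ hk)
    refine ⟨v.eraseIdx k, cs.isReduced_of_length_le ?_, hπ⟩
    rw [hπ, hv.eq]
    simp only [length_cons]
    omega

theorem exists_isReduced_braid_of_isLeftDescent {w : W} {i j : B} (h3 : M i j = 3)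
    (hij : s i ≠ s j) (hi : cs.IsLeftDescent w i) (hj : cs.IsLeftDescent w j) :
    ∃ r, cs.IsReduced (i :: j :: i :: r) ∧ π (i :: j :: i :: r) = w := by
  obtain ⟨t, ht, rfl⟩ := cs.exists_isReduced_cons_cons_of_isLeftDescent hij hi hj
  have hbraid := cs.simple_braid_of_eq_three h3
  obtain ⟨_ | _ | m, hm, hdel⟩ := cs.exists_eraseIdx_of_isLeftDescent hj
  · rw [eraseIdx_cons_zero, wordProd_cons (i := i), ← mul_assoc, mul_eq_right,
      mul_eq_one_iff_eq_inv, inv_simple] at hdel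
    exact absurd hdel.symm hij
  · rw [eraseIdx_cons_succ, eraseIdx_cons_zero] at hdel
    simp only [wordProd_cons, ← mul_assoc, mul_left_inj] at hdel
    rw [← hbraid, mul_assoc, mul_eq_left, mul_eq_one_iff_eq_inv, inv_simple] at hdel
    exact absurd hdel.symm hij
  · rw [eraseIdx_cons_succ, eraseIdx_cons_succ] at hdel
    have hπ : π (i :: j :: i :: t.eraseIdx m) = π (i :: j :: t) := by
      rw [← cs.simple_mul_simple_cancel_left (w := π (i :: j :: t)) j, hdel]
      simp only [wordProd_cons, ← mul_assoc, hbraid]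
    have hlen := length_eraseIdx_add_one (Nat.lt_of_succ_lt_succ (Nat.lt_of_succ_lt_succ hm))
    refine ⟨t.eraseIdx m, cs.isReduced_of_length_le ?_, hπ⟩
    rw [hπ, ht.eq]
    simp only [length_cons] at hm ⊢
    omega

def HasReducedBraidWord (w : W) : Prop :=
  ∃ (u : List B) (i j : B), cs.IsReduced u ∧ π u = w ∧ M i j ≠ 2 ∧ i ≠ j ∧ [i, j, i] <:+: u

theorem HasReducedBraidWord.of_simple_mul {cs : CoxeterSystem M W} {w : W} {i : B}
    (h : cs.HasReducedBraidWord (cs.simple i * w)) (hi : cs.IsLeftDescent w i) :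
    cs.HasReducedBraidWord w := by
  obtain ⟨u, j, k, hu, hπ, hM, hjk, hinf⟩ := h
  refine ⟨i :: u, j, k, cs.isReduced_cons hu ?_, ?_, hM, hjk, infix_cons hinf⟩
  · rw [hπ]
    exact cs.isLeftDescent_iff_not_isLeftDescent_mul.mp hi
  · rw [wordProd_cons, hπ, simple_mul_simple_cancel_left]

theorem not_fullyCommutative_of_isReduced_braid {x y : List B} {i j : B} (h3 : M i j = 3)
    (hij : i ≠ j) (hu : cs.IsReduced (x ++ [i, j, i] ++ y)) :
    ¬FullyCommutative cs (π (x ++ [i, j, i] ++ y)) := by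
  classical
  intro hfc
  have hπ : π (x ++ [j, i, j] ++ y) = π (x ++ [i, j, i] ++ y) := by
    have hbraid : π [j, i, j] = π [i, j, i] := by
      simp [wordProd_cons, ← mul_assoc, cs.simple_braid_of_eq_three h3]
    rw [wordProd_append, wordProd_append, hbraid, ← wordProd_append, ← wordProd_append]
  have hv : cs.IsReduced (x ++ [j, i, j] ++ y) :=
    cs.isReduced_of_length_le (by rw [hπ, hu.eq]; simp)
  have hcount := (CommMove.perm_of_reflTransGen (hfc _ _ hu hv rfl hπ)).count_eq i
  simp [hij.symm] at hcount

theorem reflTransGen_commMove_of_not_hasReducedBraidWord (hsl : M.IsSimplyLaced) {w : W}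
    (hw : ¬cs.HasReducedBraidWord w) {u v : List B} (hu : cs.IsReduced u) (hv : cs.IsReduced v)
    (hpu : π u = w) (hpv : π v = w) : Relation.ReflTransGen (CommMove M) u v := by
  have hlen : u.length = v.length := by rw [← hu.eq, ← hv.eq, hpu, hpv]
  rcases u with _ | ⟨i, u⟩ <;> rcases v with _ | ⟨j, v⟩
  · exact .refl
  · simp at hlen
  · simp at hlen
  have hi : cs.IsLeftDescent w i := hpu ▸ hu.isLeftDescent_cons
  have hj : cs.IsLeftDescent w j := hpv ▸ hv.isLeftDescent_cons
  have hpu' : π u = s i * w := by rw [← hpu, wordProd_cons, simple_mul_simple_cancel_left]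
  have hpv' : π v = s j * w := by rw [← hpv, wordProd_cons, simple_mul_simple_cancel_left]
  have hwi : ¬cs.HasReducedBraidWord (s i * w) := fun h => hw (h.of_simple_mul hi)
  have hwj : ¬cs.HasReducedBraidWord (s j * w) := fun h => hw (h.of_simple_mul hj)
  rcases eq_or_ne i j with rfl | hij
  · exact CommMove.reflTransGen_cons
      (reflTransGen_commMove_of_not_hasReducedBraidWord hsl hwi (hu.drop 1) (hv.drop 1) hpu' hpv') i
  have hsij : s i ≠ s j := (cs.simple_injective hsl).ne hij
  rcases hsl i j hij with h2 | h3
  · obtain ⟨t, ht, hpt⟩ := cs.exists_isReduced_cons_cons_of_isLeftDescent hsij hi hj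
    have hmove : CommMove M (i :: j :: t) (j :: i :: t) := ⟨[], t, i, j, h2, rfl, rfl⟩
    have hpt' : π (j :: i :: t) = w := (cs.wordProd_eq_of_commMove hmove).symm.trans hpt
    have ht' : cs.IsReduced (j :: i :: t) :=
      cs.isReduced_of_length_le (by rw [hpt', ← hpt, ht.eq]; rfl)
    have hjt : π (j :: t) = s i * w := by
      rw [← hpt, cs.wordProd_cons i, simple_mul_simple_cancel_left]
    have hit : π (i :: t) = s j * w := by
      rw [← hpt', cs.wordProd_cons j, simple_mul_simple_cancel_left]
    have hu_jt := reflTransGen_commMove_of_not_hasReducedBraidWord hsl hwi (hu.drop 1) (ht.drop 1)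
      hpu' hjt
    have hv_it := reflTransGen_commMove_of_not_hasReducedBraidWord hsl hwj (hv.drop 1)
      (ht'.drop 1) hpv' hit
    exact (CommMove.reflTransGen_cons hu_jt i).trans
      (.head hmove (CommMove.reflTransGen_cons (Std.Symm.symm _ _ hv_it) j))
  · obtain ⟨r, hr, hpr⟩ := cs.exists_isReduced_braid_of_isLeftDescent h3 hsij hi hj
    exact absurd ⟨_, i, j, hr, hpr, by omega, hij, ⟨[], r, rfl⟩⟩ hw
termination_by cs.length w
decreasing_by all_goals assumption

end CoxeterSystem

/-- In a simply-laced Coxeter group (all off-diagonal bonds are `2` or `3`), an element `w`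
is fully commutative if and only if no reduced word for `w` contains a subword `[i, j, i]`
with `sᵢ`, `sⱼ` non-commuting. -/
theorem fullyCommutative_iff_no_braid {B W : Type*} [Group W] {M : CoxeterMatrix B}
    (cs : CoxeterSystem M W) (hsl : ∀ i j : B, i ≠ j → M i j = 2 ∨ M i j = 3) (w : W) :
    FullyCommutative cs w ↔
      ¬ ∃ (u : List B) (i j : B), cs.IsReduced u ∧ cs.wordProd u = w ∧
          M i j ≠ 2 ∧ i ≠ j ∧ [i, j, i] <:+: u := by
  constructor
  · rintro hfc ⟨u, i, j, hu, rfl, hM, hij, x, y, rfl⟩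
    exact cs.not_fullyCommutative_of_isReduced_braid ((hsl i j hij).resolve_left hM) hij hu hfc
  · intro hw u v hu hv hpu hpv
    exact cs.reflTransGen_commMove_of_not_hasReducedBraidWord hsl hw hu hv hpu hpv
end

section
/- Every word of the form [n, n-2, n-3, …, j₁] · [n-1, n-2, …, j₂] · [n, n-2, …, j₃] ⋯ with 1 ≤ j₁ < j₂ < ⋯ < j_ℓ ≤ n-1 (a 'suffix' in type Dₙ) is a homogeneous word: whenever the same letter i appears in positions r < s of the word, there exist positions t, u with r < t < u < s such that the letters at positions t and u are both neighbors of i in the Dₙ Dynkin diagram. -/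
/-- Letters `i` and `j` (from `{1, …, n}`) are neighbors in the `Dₙ` Dynkin diagram:
`1 – 2 – ⋯ – (n-2)` is a path, and both `n-1` and `n` are adjacent to `n-2`. -/
def dnAdj (n i j : ℕ) : Prop :=
  (i + 1 = j ∧ j ≤ n - 1) ∨ (j + 1 = i ∧ i ≤ n - 1) ∨
  (i = n ∧ j = n - 2) ∨ (j = n ∧ i = n - 2)

/-- A word `w` is homogeneous (with respect to a neighbor relation `adj`): whenever the same
letter appears in positions `r < s`, there are positions `t, u` with `r < t < u < s` whose
letters are both neighbors of that letter. -/
def Homog {α : Type*} (adj : α → α → Prop) (w : List α) : Prop :=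
  ∀ r s : Fin w.length, (r : ℕ) < s → w.get r = w.get s →
    ∃ t u : Fin w.length, (r : ℕ) < t ∧ (t : ℕ) < u ∧ (u : ℕ) < s ∧
      adj (w.get r) (w.get t) ∧ adj (w.get r) (w.get u)

/-- The descending word `[a, a-1, …, b]` (empty if `a < b`). -/
def desc (a b : ℕ) : List ℕ := (List.range (a + 1 - b)).map (fun t => a - t)

/-- The suffix word `s_{n,j₁} s_{n-1,j₂} s_{n,j₃} ⋯` of type `Dₙ` determined by the indices
`j₁ < j₂ < ⋯ < j_ℓ`; the boolean records whether the next segment starts with `n` (`true`)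
or with `n-1` (`false`). -/
def suffixWord (n : ℕ) : Bool → List ℕ → List ℕ
  | _, [] => []
  | b, j :: js => ((if b then n else n - 1) :: desc (n - 2) j) ++ suffixWord n (!b) js

/-- Validity of the indices `j₁ < j₂ < ⋯ < j_ℓ` of a suffix: strictly increasing and
contained in `{1, …, n-1}`. -/
def ValidSuffixIdx (n : ℕ) (js : List ℕ) : Prop :=
  js.Chain' (· < ·) ∧ ∀ j ∈ js, 1 ≤ j ∧ j ≤ n - 1

/-- The prefix word `s_{1,i₁} s_{2,i₂} ⋯ s_{n-1,i_{n-1}}` where `s_{k,i} = [k, k-1, …, i]`. -/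
def prefixWord (n : ℕ) (i : ℕ → ℕ) : List ℕ :=
  (List.range (n - 1)).flatMap (fun k => desc (k + 1) (i (k + 1)))

/-- Validity of the indices of a prefix: `1 ≤ i_k ≤ k + 1` for `1 ≤ k ≤ n-1`. -/
def ValidPrefixIdx (n : ℕ) (i : ℕ → ℕ) : Prop :=
  ∀ k, 1 ≤ k → k ≤ n - 1 → 1 ≤ i k ∧ i k ≤ k + 1

/-- The collection labeled by a suffix `suf`: all homogeneous canonical words of type `Dₙ`
with suffix `suf`. -/
def collection (n : ℕ) (suf : List ℕ) : Set (List ℕ) :=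
  {w | ∃ i, ValidPrefixIdx n i ∧ w = prefixWord n i ++ suf ∧ Homog (dnAdj n) w}

/-!
A suffix is a concatenation of strictly decreasing segments `h :: [n-2, …, j]` whose heads `h`
alternate between `n` and `n-1`, and homogeneity only has to be checked for two occurrences of a
letter `a` lying in different segments. If `a` is a head, its occurrences are two segments apart,
and both segments in between start with its neighbour `n-2`: their indices are below `n-1`
because the indices increase. If `a ≤ n-2`, a later segment with index `≤ a` exists, so the
earlier segment has index `< a` and continues with `a-1` after `a`; in the later segment `a` is
preceded by its neighbour `a+1`, or by the head when `a = n-2`.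
-/

section Lists

variable {α : Type*}

theorem List.eq_take_cons_drop_cons (w : List α) {r s : ℕ} (hrs : r < s)
    (hs : s < w.length) :
    w = w.take r ++ w[r] :: ((w.take s).drop (r + 1) ++ w[s] :: w.drop (s + 1)) := by
  calc w = (w.take s).take (r + 1) ++ (w.take s).drop (r + 1) ++ w.drop s := by
        rw [List.take_append_drop, List.take_append_drop]
    _ = _ := by
        rw [List.take_take, min_eq_left hrs, List.take_add_one,
          List.getElem?_eq_getElem (by omega), List.drop_eq_getElem_cons hs]
        simp only [Option.toList_some, List.append_assoc, List.cons_append, List.nil_append]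

theorem List.exists_eq_append_of_notMem {u v y z : List α} {a : α} (ha : a ∉ u)
    (h : u ++ v = y ++ a :: z) : ∃ y', y = u ++ y' ∧ v = y' ++ a :: z := by
  rcases List.append_eq_append_iff.1 h with ⟨y', rfl, hv⟩ | ⟨c, rfl, hc⟩
  · exact ⟨y', rfl, hv⟩
  · rcases List.append_eq_cons_iff.1 hc.symm with ⟨rfl, hv⟩ | ⟨c', rfl, -⟩
    · exact ⟨[], by simp, hv⟩
    · simp at ha

theorem List.Pairwise.mem_left_of_gt [Preorder α] {y z : List α} {a b : α}
    (h : (y ++ a :: z).Pairwise (· > ·)) (hb : b ∈ y ++ a :: z) (hab : a < b) : b ∈ y := by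
  rw [List.pairwise_append, List.pairwise_cons] at h
  rcases List.mem_append.1 hb with hb | hb
  · exact hb
  · rcases List.mem_cons.1 hb with rfl | hb
    · exact absurd hab (lt_irrefl b)
    · exact absurd hab (lt_asymm (h.2.1.1 b hb))

theorem List.Pairwise.mem_right_of_lt [Preorder α] {y z : List α} {a b : α}
    (h : (y ++ a :: z).Pairwise (· > ·)) (hb : b ∈ y ++ a :: z) (hba : b < a) : b ∈ z := by
  rw [List.pairwise_append] at h
  rcases List.mem_append.1 hb with hb | hb
  · exact absurd hba (lt_asymm (h.2.2 b hb a List.mem_cons_self))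
  · rcases List.mem_cons.1 hb with rfl | hb
    · exact absurd hba (lt_irrefl b)
    · exact hb

def SplitHomog (adj : α → α → Prop) (w : List α) : Prop :=
  ∀ x y z a, w = x ++ a :: (y ++ a :: z) → ∃ b e, [b, e].Sublist y ∧ adj a b ∧ adj a e

variable {adj : α → α → Prop}

theorem Homog.of_splitHomog {w : List α} (h : SplitHomog adj w) : Homog adj w := by
  intro r s hrs hrs'
  have hdec := w.eq_take_cons_drop_cons hrs s.2
  simp only [List.get_eq_getElem] at hrs' ⊢
  rw [← hrs'] at hdec
  obtain ⟨b, e, hsub, hb, he⟩ := h _ _ _ _ hdec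
  obtain ⟨f, hf⟩ := List.sublist_iff_exists_fin_orderEmbedding_get_eq.1 hsub
  have hlt : (f 0 : ℕ) < f 1 := f.strictMono (by simp)
  have hlen : ((w.take s).drop (r + 1)).length = s - (r + 1) := by simp
  have hf0 := (f 0).2
  have hf1 := (f 1).2
  refine ⟨⟨r + 1 + f 0, by omega⟩, ⟨r + 1 + f 1, by omega⟩, by dsimp only; omega,
    by dsimp only; omega, by dsimp only; omega, ?_, ?_⟩
  · have hb' : b = w[(r : ℕ) + 1 + f 0] := by simpa using hf 0
    simpa [← hb'] using hb
  · have he' : e = w[(r : ℕ) + 1 + f 1] := by simpa using hf 1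
    simpa [← he'] using he

theorem SplitHomog.of_nodup {w : List α} (hw : w.Nodup) : SplitHomog adj w := by
  rintro x y z a rfl
  simp [List.nodup_append] at hw

theorem SplitHomog.append {u v : List α}
    (hu : SplitHomog adj u) (hv : SplitHomog adj v)
    (huv : ∀ x y₁ y₂ z a, u = x ++ a :: y₁ → v = y₂ ++ a :: z →
      ∃ b e, [b, e].Sublist (y₁ ++ y₂) ∧ adj a b ∧ adj a e) :
    SplitHomog adj (u ++ v) := by
  intro x y z a h
  rcases List.append_eq_append_iff.1 h with ⟨x', rfl, hv'⟩ | ⟨c, rfl, hc⟩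
  · exact hv x' y z a hv'
  · rcases List.append_eq_cons_iff.1 hc.symm with ⟨rfl, hv'⟩ | ⟨c', rfl, hc'⟩
    · exact hv [] y z a (by simpa using hv')
    · rcases List.append_eq_append_iff.1 hc'.symm with ⟨y₂, rfl, hv'⟩ | ⟨d, rfl, hd⟩
      · exact huv x c' y₂ z a rfl hv'
      · rcases List.append_eq_cons_iff.1 hd.symm with ⟨rfl, hv'⟩ | ⟨d', rfl, -⟩
        · simpa using huv x y [] z a (by simp) hv'
        · exact hu x y d' a (by simp)

end Lists

theorem desc_eq_reverse_range' (a b : ℕ) : desc a b = (List.range' b (a + 1 - b)).reverse := by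
  rw [List.reverse_range', desc]
  refine List.map_congr_left fun t ht => ?_
  rw [List.mem_range] at ht
  omega

theorem mem_desc {a b x : ℕ} : x ∈ desc a b ↔ b ≤ x ∧ x ≤ a := by
  simp only [desc_eq_reverse_range', List.mem_reverse, List.mem_range'_1]
  omega

theorem pairwise_gt_desc (a b : ℕ) : (desc a b).Pairwise (· > ·) := by
  rw [desc_eq_reverse_range', List.pairwise_reverse]
  exact List.pairwise_lt_range'

def suffixHead (n : ℕ) (b : Bool) : ℕ := if b then n else n - 1

theorem suffixHead_eq (n : ℕ) (b : Bool) : suffixHead n b = n ∨ suffixHead n b = n - 1 := by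
  cases b <;> simp [suffixHead]

theorem suffixHead_not_ne {n : ℕ} (hn : 1 ≤ n) (b : Bool) :
    suffixHead n (!b) ≠ suffixHead n b := by
  cases b <;> simp only [suffixHead, Bool.not_true, Bool.not_false, Bool.false_eq_true,
    ↓reduceIte] <;> omega

theorem sub_two_lt_suffixHead {n : ℕ} (hn : 2 ≤ n) (b : Bool) : n - 2 < suffixHead n b := by
  rcases suffixHead_eq n b with h | h <;> omega

theorem dnAdj_suffixHead_sub_two {n : ℕ} (hn : 2 ≤ n) (b : Bool) :
    dnAdj n (suffixHead n b) (n - 2) := by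
  rcases suffixHead_eq n b with h | h <;> rw [h, dnAdj] <;> omega

theorem dnAdj_sub_two_suffixHead {n : ℕ} (hn : 2 ≤ n) (b : Bool) :
    dnAdj n (n - 2) (suffixHead n b) := by
  rcases suffixHead_eq n b with h | h <;> rw [h, dnAdj] <;> omega

theorem suffixWord_cons (n : ℕ) (b : Bool) (k : ℕ) (ks : List ℕ) :
    suffixWord n b (k :: ks) = (suffixHead n b :: desc (n - 2) k) ++ suffixWord n (!b) ks :=
  rfl

theorem eq_suffixHead_of_suffixWord_eq_cons {n a : ℕ} {b : Bool} {ks z : List ℕ}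
    (h : suffixWord n b ks = a :: z) : a = suffixHead n b := by
  cases ks with
  | nil => simp [suffixWord] at h
  | cons k ks => exact (List.cons.inj h).1.symm

theorem pairwise_gt_suffixHead_cons_desc {n : ℕ} (hn : 2 ≤ n) (b : Bool) (k : ℕ) :
    (suffixHead n b :: desc (n - 2) k).Pairwise (· > ·) := by
  refine List.pairwise_cons.2 ⟨fun x hx => ?_, pairwise_gt_desc _ _⟩
  have := sub_two_lt_suffixHead hn b
  rw [mem_desc] at hx
  omega

theorem ValidSuffixIdx.of_cons {n k : ℕ} {ks : List ℕ} (h : ValidSuffixIdx n (k :: ks)) :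
    (1 ≤ k ∧ k ≤ n - 1) ∧ (∀ k' ∈ ks, k < k') ∧ ValidSuffixIdx n ks := by
  obtain ⟨hchain, hmem⟩ := h
  exact ⟨hmem k List.mem_cons_self, (List.pairwise_cons.1 (List.isChain_iff_pairwise.1 hchain)).1,
    hchain.tail, fun j hj => hmem j (List.mem_cons_of_mem k hj)⟩

theorem exists_le_of_mem_suffixWord {n a : ℕ} (ha : a + 2 ≤ n) :
    ∀ {b : Bool} {ks : List ℕ}, a ∈ suffixWord n b ks → ∃ k ∈ ks, k ≤ a
  | _, [], h => by simp [suffixWord] at h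
  | b, k :: ks, h => by
    rw [suffixWord_cons, List.mem_append, List.mem_cons, mem_desc] at h
    rcases h with (h | h) | h
    · have := sub_two_lt_suffixHead (n := n) (by omega) b
      omega
    · exact ⟨k, List.mem_cons_self, h.1⟩
    · obtain ⟨k', hk', hk'a⟩ := exists_le_of_mem_suffixWord ha h
      exact ⟨k', List.mem_cons_of_mem k hk', hk'a⟩

theorem exists_mem_dnAdj_of_suffixWord_eq {n a : ℕ} (ha : a + 2 ≤ n) :
    ∀ {b : Bool} {ks y z : List ℕ}, suffixWord n b ks = y ++ a :: z → ∃ e ∈ y, dnAdj n a e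
  | _, [], y, z, h => by simp [suffixWord] at h
  | b, k :: ks, y, z, h => by
    rw [suffixWord_cons] at h
    rcases List.append_eq_append_iff.1 h with ⟨y', rfl, h'⟩ | ⟨c, hseg, hc⟩
    · obtain ⟨e, he, hadj⟩ := exists_mem_dnAdj_of_suffixWord_eq ha h'
      exact ⟨e, List.mem_append_right _ he, hadj⟩
    rcases List.append_eq_cons_iff.1 hc.symm with ⟨rfl, h'⟩ | ⟨c', rfl, -⟩
    · have := eq_suffixHead_of_suffixWord_eq_cons h'
      have := sub_two_lt_suffixHead (n := n) (by omega) (!b)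
      omega
    have hpw := pairwise_gt_suffixHead_cons_desc (n := n) (by omega) b k
    have hhead := sub_two_lt_suffixHead (n := n) (by omega) b
    have hy : ∀ x ∈ suffixHead n b :: desc (n - 2) k, a < x → x ∈ y := fun x hx hax =>
      (hseg ▸ hpw).mem_left_of_gt (hseg ▸ hx) hax
    have hk : k ≤ a := by
      have ha' : a ∈ suffixHead n b :: desc (n - 2) k := by simp [hseg]
      rw [List.mem_cons, mem_desc] at ha'
      omega
    by_cases hpath : a + 3 ≤ n
    · have hmem : a + 1 ∈ desc (n - 2) k := mem_desc.2 ⟨by omega, by omega⟩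
      refine ⟨a + 1, hy _ (List.mem_cons_of_mem _ hmem) (by omega), ?_⟩
      unfold dnAdj
      omega
    · refine ⟨suffixHead n b, hy _ List.mem_cons_self (by omega), ?_⟩
      rw [show a = n - 2 by omega]
      exact dnAdj_sub_two_suffixHead (by omega) b

theorem sub_two_mem_of_suffixWord_eq {n : ℕ} {b : Bool} {ks y z : List ℕ}
    (hks : ValidSuffixIdx n ks) (h : suffixWord n (!b) ks = y ++ suffixHead n b :: z) :
    n - 2 ∈ y := by
  cases ks with
  | nil => simp [suffixWord] at h
  | cons k ks =>
    obtain ⟨⟨hk1, hkn⟩, hlt, -⟩ := hks.of_cons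
    rw [suffixWord_cons, Bool.not_not] at h
    have hhead : suffixHead n b ∉ suffixHead n (!b) :: desc (n - 2) k := by
      have := suffixHead_not_ne (n := n) (by omega) b
      have := sub_two_lt_suffixHead (n := n) (by omega) b
      rw [List.mem_cons, mem_desc]
      omega
    obtain ⟨y', rfl, h'⟩ := List.exists_eq_append_of_notMem hhead h
    cases ks with
    | nil => simp [suffixWord] at h'
    | cons k' ks =>
      have := hlt k' List.mem_cons_self
      have := (hks.2 k' (by simp)).2
      exact List.mem_append_left _ (List.mem_cons_of_mem _ (mem_desc.2 ⟨by omega, le_rfl⟩))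

theorem exists_sublist_dnAdj_of_segment_suffixWord {n k a : ℕ} {b : Bool}
    {ks x y₁ y₂ z : List ℕ} (hks : ValidSuffixIdx n (k :: ks))
    (hx : suffixHead n b :: desc (n - 2) k = x ++ a :: y₁)
    (hz : suffixWord n (!b) ks = y₂ ++ a :: z) :
    ∃ c e, [c, e].Sublist (y₁ ++ y₂) ∧ dnAdj n a c ∧ dnAdj n a e := by
  obtain ⟨⟨hk1, hkn⟩, hlt, hks'⟩ := hks.of_cons
  cases x with
  | nil =>
    obtain ⟨rfl, rfl⟩ := List.cons.inj hx
    obtain ⟨k', ks', rfl⟩ : ∃ k' ks', ks = k' :: ks' := by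
      cases ks with
      | nil => simp [suffixWord] at hz
      | cons k' ks' => exact ⟨k', ks', rfl⟩
    have := hlt k' List.mem_cons_self
    have := (hks'.2 k' List.mem_cons_self).2
    have h₁ : n - 2 ∈ desc (n - 2) k := mem_desc.2 ⟨by omega, le_rfl⟩
    have h₂ := sub_two_mem_of_suffixWord_eq hks' hz
    exact ⟨n - 2, n - 2, (List.singleton_sublist.2 h₁).append (List.singleton_sublist.2 h₂),
      dnAdj_suffixHead_sub_two (by omega) b, dnAdj_suffixHead_sub_two (by omega) b⟩
  | cons x₀ x =>
    rw [List.cons_append, List.cons.injEq] at hx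
    obtain ⟨-, hD⟩ := hx
    have ha : k ≤ a ∧ a ≤ n - 2 :=
      mem_desc.1 (hD ▸ List.mem_append_right _ List.mem_cons_self)
    obtain ⟨k', hk', hk'a⟩ := exists_le_of_mem_suffixWord (by omega : a + 2 ≤ n)
      (hz ▸ List.mem_append_right _ List.mem_cons_self)
    have := hlt k' hk'
    have hpw := pairwise_gt_desc (n - 2) k
    have hmem : a - 1 ∈ desc (n - 2) k := mem_desc.2 ⟨by omega, by omega⟩
    rw [hD] at hpw hmem
    have h₁ : a - 1 ∈ y₁ := hpw.mem_right_of_lt hmem (by omega)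
    obtain ⟨e, h₂, he⟩ := exists_mem_dnAdj_of_suffixWord_eq (by omega) hz
    refine ⟨a - 1, e, (List.singleton_sublist.2 h₁).append (List.singleton_sublist.2 h₂),
      by unfold dnAdj; omega, he⟩

theorem splitHomog_suffixWord {n : ℕ} :
    ∀ {b : Bool} {ks : List ℕ}, ValidSuffixIdx n ks → SplitHomog (dnAdj n) (suffixWord n b ks)
  | _, [], _ => SplitHomog.of_nodup List.nodup_nil
  | b, k :: ks, hks => by
    obtain ⟨⟨hk1, hkn⟩, -, hks'⟩ := hks.of_cons
    rw [suffixWord_cons]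
    exact (SplitHomog.of_nodup (pairwise_gt_suffixHead_cons_desc (by omega) b k).nodup).append
      (splitHomog_suffixWord hks') fun _ _ _ _ _ hx hz =>
        exists_sublist_dnAdj_of_segment_suffixWord hks hx hz

theorem suffix_homogeneous_general (n : ℕ) (js : List ℕ) (hjs : ValidSuffixIdx n js) :
    Homog (dnAdj n) (suffixWord n true js) :=
  Homog.of_splitHomog (splitHomog_suffixWord hjs)

/-- Every suffix of type `Dₙ` is a homogeneous word. -/
theorem suffix_homogeneous (n : ℕ) (hn : 4 ≤ n) (js : List ℕ) (hjs : ValidSuffixIdx n js) :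
    Homog (dnAdj n) (suffixWord n true js) :=
  suffix_homogeneous_general n js hjs
end

section
/- Let Γ be a quiver with vertex set I and no double bonds, and let α ∈ Q₊. If C is a connected component of the weight graph G_α (vertices: words in ⟨I⟩_α; edges: admissible transpositions) and some word w ∈ C is homogeneous, then every word in C is homogeneous. -/
/-- Distinct vertices `i` and `j` of a quiver are neighbors if there is an arrow `i ⟶ j`
or an arrow `j ⟶ i`. -/
def Nbr (I : Type*) [Quiver I] (i j : I) : Prop :=
  i ≠ j ∧ (Nonempty (i ⟶ j) ∨ Nonempty (j ⟶ i))

/-- Two words are related by an admissible transposition: they differ by swapping two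
adjacent letters that are neither equal nor neighbors. This is the edge relation of the
weight graph `G_α` (words of a fixed content `α` are sent to words of the same content). -/
def AdmissibleSwap (I : Type*) [Quiver I] (w v : List I) : Prop :=
  ∃ (a b : List I) (i j : I), i ≠ j ∧ ¬ Nbr I i j ∧
    w = a ++ i :: j :: b ∧ v = a ++ j :: i :: b

/-- The transposition of indices `L` and `L+1`. -/
private def swapIdx (L k : ℕ) : ℕ := if k = L then L + 1 else if k = L + 1 then L else k

private lemma swapIdx_invol (L k : ℕ) : swapIdx L (swapIdx L k) = k := by
  unfold swapIdx; split_ifs <;> omega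

private lemma swapIdx_lt {L k n : ℕ} (hn : L + 2 ≤ n) (h : k < n) : swapIdx L k < n := by
  unfold swapIdx; split_ifs <;> omega

private lemma swapIdx_mono {L x y : ℕ} (h : x < y) (hne : ¬ (x = L ∧ y = L + 1)) :
    swapIdx L x < swapIdx L y := by
  unfold swapIdx; split_ifs <;> omega

private lemma lt_of_swapIdx_lt {L r : ℕ} (h : swapIdx L r < L) : r < L := by
  unfold swapIdx at h; split_ifs at h <;> omega

private lemma gt_of_swapIdx_gt {L s : ℕ} (h : L + 1 < swapIdx L s) : L + 1 < s := by
  unfold swapIdx at h; split_ifs at h <;> omega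

private lemma getX {α : Type*} (a b : List α) (x y : α)
    (h : a.length < (a ++ x :: y :: b).length) :
    (a ++ x :: y :: b)[a.length]'h = x := by
  rw [List.getElem_append_right (le_refl _)]; simp

private lemma getY {α : Type*} (a b : List α) (x y : α)
    (h : a.length + 1 < (a ++ x :: y :: b).length) :
    (a ++ x :: y :: b)[a.length + 1]'h = y := by
  rw [List.getElem_append_right (by omega)]; simp

private lemma getB {α : Type*} (a b : List α) (x y : α) (k : ℕ) (h : a.length + 2 ≤ k)
    (h2 : k < (a ++ x :: y :: b).length) :
    (a ++ x :: y :: b)[k]'h2 = b[k - a.length - 2]'(by simp at h2; omega) := by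
  rw [List.getElem_append_right (by omega)]
  simp only [List.getElem_cons]
  rw [dif_neg (by omega), dif_neg (by omega)]
  simp only [show k - a.length - 1 - 1 = k - a.length - 2 from by omega]

private lemma get_swap {α : Type*} (a b : List α) (x y : α) (k : ℕ)
    (hk : k < (a ++ y :: x :: b).length)
    (hk' : swapIdx a.length k < (a ++ x :: y :: b).length) :
    (a ++ y :: x :: b)[k]'hk = (a ++ x :: y :: b)[swapIdx a.length k]'hk' := by
  rcases eq_or_ne k a.length with h1 | h1
  · subst h1
    have e : swapIdx a.length a.length = a.length + 1 := by unfold swapIdx; simp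
    simp only [e] at hk' ⊢
    rw [getX a b y x, getY a b x y]
  rcases eq_or_ne k (a.length + 1) with h2 | h2
  · subst h2
    have e : swapIdx a.length (a.length + 1) = a.length := by unfold swapIdx; simp
    simp only [e] at hk' ⊢
    rw [getY a b y x, getX a b x y]
  · have e : swapIdx a.length k = k := by unfold swapIdx; simp [h1, h2]
    simp only [e] at hk' ⊢
    by_cases hlt : k < a.length
    · rw [List.getElem_append_left hlt, List.getElem_append_left hlt]
    · rw [getB a b y x k (by omega), getB a b x y k (by omega)]

private lemma homog_swap {α : Type*} (adj : α → α → Prop) (a b : List α) (x y : α)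
    (hxy : x ≠ y) (hadj : ¬ adj x y) (hadj' : ¬ adj y x)
    (hw : Homog adj (a ++ x :: y :: b)) : Homog adj (a ++ y :: x :: b) := by
  unfold Homog at hw ⊢
  simp only [List.get_eq_getElem] at hw ⊢
  intro r s hrs heq
  have hlenv : (a ++ y :: x :: b).length = a.length + 2 + b.length := by simp; omega
  have hlenw : (a ++ x :: y :: b).length = a.length + 2 + b.length := by simp; omega
  have hr : (r : ℕ) < a.length + 2 + b.length := by rw [← hlenv]; exact r.isLt
  have hs : (s : ℕ) < a.length + 2 + b.length := by rw [← hlenv]; exact s.isLt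
  have hrsne : ¬ ((r : ℕ) = a.length ∧ (s : ℕ) = a.length + 1) := by
    rintro ⟨h1, h2⟩
    apply hxy
    simp only [h1, h2] at heq
    rw [getX a b y x, getY a b y x] at heq
    exact heq.symm
  rw [get_swap a b x y (r : ℕ) r.isLt (by rw [hlenw]; exact swapIdx_lt (by omega) hr)] at heq ⊢
  rw [get_swap a b x y (s : ℕ) s.isLt (by rw [hlenw]; exact swapIdx_lt (by omega) hs)] at heq
  have hσrs : swapIdx a.length (r : ℕ) < swapIdx a.length (s : ℕ) := swapIdx_mono hrs hrsne
  obtain ⟨t, u, htr, htu, hus, hat, hau⟩ :=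
    hw ⟨swapIdx a.length (r : ℕ), by rw [hlenw]; exact swapIdx_lt (by omega) hr⟩
       ⟨swapIdx a.length (s : ℕ), by rw [hlenw]; exact swapIdx_lt (by omega) hs⟩ hσrs heq
  simp only [Fin.val_mk] at htr hus hat hau
  have ht : (t : ℕ) < a.length + 2 + b.length := by rw [← hlenw]; exact t.isLt
  have hu : (u : ℕ) < a.length + 2 + b.length := by rw [← hlenw]; exact u.isLt
  by_cases hA : (t : ℕ) = a.length ∧ (u : ℕ) = a.length + 1
  · obtain ⟨h1, h2⟩ := hA
    refine ⟨⟨a.length, by rw [hlenv]; omega⟩, ⟨a.length + 1, by rw [hlenv]; omega⟩,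
      ?_, ?_, ?_, ?_, ?_⟩
    · simp only [Fin.val_mk]
      exact lt_of_swapIdx_lt (h1 ▸ htr)
    · simp only [Fin.val_mk]; omega
    · simp only [Fin.val_mk]
      exact gt_of_swapIdx_gt (h2 ▸ hus)
    · simp only [Fin.val_mk]
      rw [getX a b y x]
      simp only [h2] at hau
      rw [getY a b x y] at hau
      exact hau
    · simp only [Fin.val_mk]
      rw [getY a b y x]
      simp only [h1] at hat
      rw [getX a b x y] at hat
      exact hat
  · have hB1 : ¬ (swapIdx a.length (r : ℕ) = a.length ∧ (t : ℕ) = a.length + 1) := by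
      rintro ⟨h1, h2⟩
      apply hadj
      simp only [h1, h2] at hat
      rw [getX a b x y, getY a b x y] at hat
      exact hat
    have hB2 : ¬ ((u : ℕ) = a.length ∧ swapIdx a.length (s : ℕ) = a.length + 1) := by
      rintro ⟨h1, h2⟩
      apply hadj'
      simp only [h1] at hau
      rw [getX a b x y] at hau
      simp only [h2] at heq
      rw [getY a b x y] at heq
      rw [heq] at hau
      exact hau
    refine ⟨⟨swapIdx a.length (t : ℕ), by rw [hlenv]; exact swapIdx_lt (by omega) ht⟩,
            ⟨swapIdx a.length (u : ℕ), by rw [hlenv]; exact swapIdx_lt (by omega) hu⟩,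
            ?_, ?_, ?_, ?_, ?_⟩
    · simp only [Fin.val_mk]
      have := swapIdx_mono htr hB1
      rwa [swapIdx_invol] at this
    · simp only [Fin.val_mk]
      exact swapIdx_mono htu hA
    · simp only [Fin.val_mk]
      have := swapIdx_mono hus hB2
      rwa [swapIdx_invol] at this
    · simp only [Fin.val_mk]
      rw [get_swap a b x y (swapIdx a.length (t : ℕ)) _
        (by rw [swapIdx_invol]; exact t.isLt)]
      simp only [swapIdx_invol]
      exact hat
    · simp only [Fin.val_mk]
      rw [get_swap a b x y (swapIdx a.length (u : ℕ)) _
        (by rw [swapIdx_invol]; exact u.isLt)]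
      simp only [swapIdx_invol]
      exact hau

/-- If `Γ` is a quiver with no double bonds and two words `w, v` lie in the same connected
component of the weight graph (i.e. are related by a chain of admissible transpositions),
then homogeneity of `w` implies homogeneity of `v`: a component containing one homogeneous
word consists entirely of homogeneous words. -/
theorem homogeneous_component {I : Type*} [Quiver I]
    (hnd : ∀ i j : I, Subsingleton (i ⟶ j))
    (w v : List I) (h : Relation.ReflTransGen (AdmissibleSwap I) w v)
    (hw : Homog (Nbr I) w) : Homog (Nbr I) v := by
  induction h with
  | refl => exact hw
  | tail _ hstep ih =>
    obtain ⟨a, b, i, j, hij, hnbr, rfl, rfl⟩ := hstep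
    exact homog_swap (Nbr I) a b i j hij hnbr
      (fun hn => hnbr ⟨hn.1.symm, hn.2.symm⟩) ih
end

section
/- For n > 4 and 1 ≤ k ≤ n-2, the cardinality of the type-Dₙ collection labeled by suffix [n, n-2, …, k] equals the cardinality of the type-Dₙ collection labeled by [n, n-2, …, k, n-1] plus the cardinality of the type-D_{n-1} collection labeled by [n-1, n-3, …, k] (interpreted as [n-1] when k = n-2). Consequently the collection sizes satisfy the Catalan-triangle recursion |c(n,k)| = |c(n,k-1)| + |c(n-1,k)|. -/
section Homog

variable {α : Type*} {adj adj' : α → α → Prop}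

theorem List.countP_lt_two_iff_pairwise {p : α → Bool} {y : List α} :
    y.countP p < 2 ↔ y.Pairwise (fun a b => ¬ (p a ∧ p b)) := by
  constructor
  · intro h
    refine List.pairwise_iff_forall_sublist.mpr fun hab ⟨ha, hb⟩ => ?_
    have := hab.countP_le (p := p)
    simp [ha, hb] at this
    omega
  · intro h
    induction y with
    | nil => simp
    | cons a t ih =>
      rw [List.pairwise_cons] at h
      by_cases ha : p a
      · have : t.countP p = 0 := List.countP_eq_zero.mpr fun b hb hpb => h.1 b hb ⟨ha, hpb⟩
        simp [ha, this]
      · simpa [ha] using ih h.2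

theorem List.two_le_countP_iff {p : α → Bool} {y : List α} :
    2 ≤ y.countP p ↔ ∃ (i j : ℕ) (hij : i < j) (hj : j < y.length), p y[i] ∧ p y[j] := by
  rw [← not_lt, List.countP_lt_two_iff_pairwise, List.pairwise_iff_getElem]
  push Not
  exact ⟨fun ⟨i, j, hi, hj, hij, h⟩ => ⟨i, j, hij, hj, h⟩,
    fun ⟨i, j, hij, hj, h⟩ => ⟨i, j, hij.trans hj, hj, hij, h⟩⟩

theorem List.eq_take_append_getElem_cons_append_getElem_cons {w : List α} {r s : ℕ}
    (hrs : r < s) (hs : s < w.length) :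
    w = w.take r ++ w[r] :: ((w.drop (r + 1)).take (s - r - 1) ++ w[s] :: w.drop (s + 1)) := by
  apply List.ext_getElem (by simp; omega)
  intro i _ _
  grind

theorem homog_of_nodup {w : List α} (hw : w.Nodup) : Homog adj w := by
  intro r s hrs heq
  exact absurd (hw.getElem_inj_iff.mp heq) (by omega)

theorem homog_congr {w : List α} (h : ∀ a ∈ w, ∀ b ∈ w, adj a b ↔ adj' a b) :
    Homog adj w ↔ Homog adj' w := by
  have key : ∀ r t : Fin w.length, adj (w.get r) (w.get t) ↔ adj' (w.get r) (w.get t) :=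
    fun r t => h _ (List.get_mem _ _) _ (List.get_mem _ _)
  simp only [Homog, key]

theorem homog_iff_countP [DecidableRel adj] {w : List α} :
    Homog adj w ↔ ∀ x a y z, w = x ++ a :: (y ++ a :: z) → 2 ≤ y.countP (adj a ·) := by
  constructor
  · rintro H x a y z rfl
    obtain ⟨t, u, hrt, htu, hus, ht, hu⟩ := H ⟨x.length, by simp⟩
      ⟨x.length + 1 + y.length, by simp; omega⟩ (by simp; omega) (by simp; grind)
    simp only [List.get_eq_getElem] at ht hu hrt hus htu
    have hgetx : (x ++ a :: (y ++ a :: z))[x.length]'(by simp) = a := by simp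
    have hgety : ∀ i (hi : x.length < i) (hi' : i ≤ x.length + y.length),
        (x ++ a :: (y ++ a :: z))[i]'(by simp; omega) = y[i - x.length - 1] := by
      intros; grind
    rw [hgetx] at ht hu
    rw [hgety t hrt (by omega)] at ht
    rw [hgety u (by omega) (by omega)] at hu
    exact List.two_le_countP_iff.mpr
      ⟨t - x.length - 1, u - x.length - 1, by omega, by omega, by simpa using ht, by simpa using hu⟩
  · intro H r s hrs heq
    have hw := List.eq_take_append_getElem_cons_append_getElem_cons hrs s.isLt
    simp only [List.get_eq_getElem] at heq ⊢
    rw [← heq] at hw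
    obtain ⟨i, j, hij, hj, hi, hj'⟩ := List.two_le_countP_iff.mp (H _ _ _ _ hw)
    simp only [List.length_take, List.length_drop] at hj
    simp only [List.getElem_take, List.getElem_drop, decide_eq_true_eq] at hi hj'
    exact ⟨⟨r + 1 + i, by omega⟩, ⟨r + 1 + j, by omega⟩, by simp; omega, by simp; omega,
      by simp; omega, by simpa [Nat.add_comm] using hi, by simpa [Nat.add_comm] using hj'⟩

theorem homog_append_iff [DecidableRel adj] {u v : List α} :
    Homog adj (u ++ v) ↔ Homog adj u ∧ Homog adj v ∧
      ∀ x a y y' z, u = x ++ a :: y → v = y' ++ a :: z → 2 ≤ (y ++ y').countP (adj a ·) := by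
  simp only [homog_iff_countP]
  constructor
  · intro H
    refine ⟨fun x a y z hu => H x a y (z ++ v) (by simp [hu]),
      fun x a y z hv => H (u ++ x) a y z (by simp [hv]),
      fun x a y y' z hu hv => H x a (y ++ y') z (by simp [hu, hv])⟩
  · rintro ⟨Hu, Hv, Hc⟩ x a y z h
    rcases List.append_eq_append_iff.mp h with ⟨as, rfl, rfl⟩ | ⟨bs, rfl, hbs⟩
    · exact Hv as a y z rfl
    rcases List.cons_eq_append_iff.mp hbs with ⟨rfl, rfl⟩ | ⟨bs', rfl, hbs'⟩
    · exact Hv [] a y z rfl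
    rcases List.append_eq_append_iff.mp hbs' with ⟨cs, rfl, hcs⟩ | ⟨ds, rfl, rfl⟩
    · rcases List.cons_eq_append_iff.mp hcs with ⟨rfl, rfl⟩ | ⟨cs', rfl, rfl⟩
      · simpa using Hc x a y [] z (by simp) rfl
      · exact Hu x a y cs' (by simp)
    · exact Hc x a bs' ds z rfl rfl

theorem homog_append_singleton_iff [DecidableRel adj] {u : List α} {b : α} :
    Homog adj (u ++ [b]) ↔ Homog adj u ∧ ∀ x y, u = x ++ b :: y → 2 ≤ y.countP (adj b ·) := by
  rw [homog_append_iff, and_congr_right_iff]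
  intro _
  simp only [homog_of_nodup (List.nodup_singleton b), true_and, List.singleton_eq_append_iff,
    List.cons_eq_cons, List.cons_ne_nil, and_false, or_false]
  constructor
  · intro H x y hu
    simpa using H x b y [] [] hu ⟨rfl, rfl, rfl⟩
  · rintro H x a y y' z hu ⟨rfl, rfl, rfl⟩
    simpa using H x y hu

end Homog

theorem nodup_desc (a b : ℕ) : (desc a b).Nodup := by
  simp [desc_eq_reverse_range', List.nodup_range']

theorem desc_eq_nil {a b : ℕ} (h : a < b) : desc a b = [] := by
  simp [desc, show a + 1 - b = 0 by omega]

theorem desc_eq_cons {a b : ℕ} (hb : b ≤ a) (ha : 0 < a) : desc a b = a :: desc (a - 1) b := by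
  rw [desc_eq_reverse_range', desc_eq_reverse_range', show a + 1 - b = a - 1 + 1 - b + 1 by omega,
    List.range'_concat, List.reverse_append]
  simp
  omega

theorem desc_eq_append_singleton {a b : ℕ} (hb : b ≤ a) : desc a b = desc a (b + 1) ++ [b] := by
  rw [desc_eq_reverse_range', desc_eq_reverse_range', show a + 1 - b = a + 1 - (b + 1) + 1 by omega,
    List.range'_succ, List.reverse_cons]

theorem desc_self (a : ℕ) : desc a a = [a] := by simp [desc]

instance (n : ℕ) : DecidableRel (dnAdj n) := fun _ _ => by unfold dnAdj; infer_instance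

theorem dnAdj_sub_one_left_iff {n b : ℕ} (hn : 2 ≤ n) : dnAdj n (n - 1) b ↔ b = n - 2 := by
  unfold dnAdj; omega

theorem dnAdj_sub_one_iff_dnAdj {n a b : ℕ} (hn : 2 ≤ n) (ha : a ≤ n - 2) (hb : b ≤ n - 2) :
    dnAdj (n - 1) a b ↔ dnAdj n a b := by
  unfold dnAdj
  constructor <;> intro h <;> omega

theorem le_of_mem_prefixWord {n a : ℕ} {i : ℕ → ℕ} (h : a ∈ prefixWord n i) : a ≤ n - 1 := by
  simp only [prefixWord, List.mem_flatMap, List.mem_range, mem_desc] at h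
  obtain ⟨k, hk, -, hak⟩ := h
  omega

theorem prefixWord_eq_append_desc {n : ℕ} (hn : 2 ≤ n) (i : ℕ → ℕ) :
    prefixWord n i = prefixWord (n - 1) i ++ desc (n - 1) (i (n - 1)) := by
  obtain ⟨m, rfl⟩ : ∃ m, n = m + 2 := ⟨n - 2, by omega⟩
  simp [prefixWord, List.range_succ]

theorem prefixWord_congr {n : ℕ} {i i' : ℕ → ℕ} (h : ∀ j, 1 ≤ j → j ≤ n - 1 → i j = i' j) :
    prefixWord n i = prefixWord n i' := by
  refine List.flatMap_congr fun t ht => ?_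
  rw [List.mem_range] at ht
  rw [h (t + 1) (by omega) (by omega)]

theorem validPrefixIdx_update {n : ℕ} (hn : 2 ≤ n) {i : ℕ → ℕ} (hv : ValidPrefixIdx (n - 1) i) :
    ValidPrefixIdx n (Function.update i (n - 1) (n - 1)) := by
  intro j hj hjn
  rcases eq_or_ne j (n - 1) with rfl | hj'
  · simp only [Function.update_self]
    omega
  · rw [Function.update_of_ne hj']
    exact hv j hj (by omega)

theorem prefixWord_update {n : ℕ} (hn : 2 ≤ n) (i : ℕ → ℕ) :
    prefixWord n (Function.update i (n - 1) (n - 1)) = prefixWord (n - 1) i ++ [n - 1] := by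
  rw [prefixWord_eq_append_desc hn, Function.update_self, desc_self,
    prefixWord_congr fun j _ hj => Function.update_of_ne (by omega) _ _]

theorem prefixWord_sub_one_eq_of_eq_append {n : ℕ} (hn : 2 ≤ n) {i : ℕ → ℕ}
    (hv : ValidPrefixIdx n i) {P : List ℕ} (h : prefixWord n i = P ++ [n - 1]) :
    prefixWord (n - 1) i = P := by
  rw [prefixWord_eq_append_desc hn] at h
  have hc := hv (n - 1) (by omega) (by omega)
  rcases eq_or_ne (i (n - 1)) n with hcn | hcn
  · rw [hcn, desc_eq_nil (by omega), List.append_nil] at h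
    have := le_of_mem_prefixWord (h ▸ List.mem_append_right P (List.mem_singleton_self (n - 1)))
    omega
  · rw [desc_eq_append_singleton (by omega), ← List.append_assoc] at h
    obtain ⟨h, hlast⟩ := List.append_inj' h rfl
    rw [List.singleton_inj] at hlast
    rwa [hlast, desc_eq_nil (by omega), List.append_nil] at h

theorem collection_finite (n : ℕ) (suf : List ℕ) : (collection n suf).Finite := by
  refine (Set.finite_range fun f : Fin n → Fin (n + 2) =>
    prefixWord n (fun j => if h : j < n then f ⟨j, h⟩ else 0) ++ suf).subset ?_
  rintro w ⟨i, hv, rfl, -⟩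
  refine ⟨fun j => ⟨min (i j) (n + 1), by omega⟩, congrArg (· ++ suf) (prefixWord_congr ?_)⟩
  intro j hj hjn
  have := hv j hj hjn
  simp only [dif_pos (show j < n by omega)]
  omega

theorem suffixWord_true_singleton (n k : ℕ) : suffixWord n true [k] = n :: desc (n - 2) k := by
  simp [suffixWord]

theorem suffixWord_true_pair_sub_one {n : ℕ} (hn : 2 ≤ n) (k : ℕ) :
    suffixWord n true [k, n - 1] = n :: desc (n - 2) k ++ [n - 1] := by
  simp [suffixWord, desc_eq_nil (show n - 2 < n - 1 by omega)]

section Dn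

variable {n k : ℕ}

theorem not_homog_append_sub_one (hn : 3 ≤ n) (hk : k ≤ n - 2) (P : List ℕ) :
    ¬ Homog (dnAdj n) (P ++ (n - 1) :: n :: desc (n - 2) k ++ [n - 1]) := by
  intro h
  have h2 := (homog_append_singleton_iff.mp h).2 P _ rfl
  have hT : (desc (n - 2 - 1) k).countP (dnAdj n (n - 1) ·) = 0 :=
    List.countP_eq_zero.mpr fun a ha hadj => by
      rw [mem_desc] at ha
      simp only [decide_eq_true_eq, dnAdj_sub_one_left_iff (by omega : 2 ≤ n)] at hadj
      omega
  rw [desc_eq_cons hk (by omega)] at h2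
  simp only [List.countP_cons, hT] at h2
  simp [dnAdj_sub_one_left_iff (by omega : 2 ≤ n), show n ≠ n - 2 by omega] at h2

theorem homog_append_sub_one (hn : 2 ≤ n) (hk : k ≤ n - 2) {P : List ℕ}
    (hP : ∀ a ∈ P, a ≤ n - 2) {c : ℕ} (hc : c ≠ n - 1)
    (h : Homog (dnAdj n) (P ++ desc (n - 1) c ++ n :: desc (n - 2) k)) :
    Homog (dnAdj n) (P ++ desc (n - 1) c ++ n :: desc (n - 2) k ++ [n - 1]) := by
  refine homog_append_singleton_iff.mpr ⟨h, fun x y hxy => ?_⟩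
  rcases lt_or_gt_of_ne hc with hc | hc
  · rw [desc_eq_cons (by omega) (by omega), List.append_assoc, List.cons_append] at hxy
    obtain ⟨-, -, rfl⟩ := (List.append_cons_inj_of_notMem (fun h => by have := hP _ h; omega)
      (by simp [mem_desc]; omega)).mp hxy
    have hpos : ∀ l : List ℕ, n - 2 ∈ l → 1 ≤ l.countP (dnAdj n (n - 1) ·) := fun l hl =>
      List.countP_pos_iff.mpr ⟨n - 2, hl, by simp [dnAdj_sub_one_left_iff (by omega : 2 ≤ n)]⟩
    have h1 := hpos (desc (n - 1 - 1) c) (mem_desc.mpr ⟨by omega, by omega⟩)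
    have h2 := hpos (n :: desc (n - 2) k) (by simp [mem_desc]; omega)
    rw [List.countP_append]
    omega
  · rw [desc_eq_nil (by omega)] at hxy
    have hmem : n - 1 ∈ P ++ [] ++ n :: desc (n - 2) k := by rw [hxy]; simp
    simp only [List.append_nil, List.mem_append, List.mem_cons, mem_desc] at hmem
    rcases hmem with hmem | hmem
    · have := hP _ hmem; omega
    · omega

theorem countP_dnAdj_insert {a : ℕ} {y T : List ℕ} (hn : 3 ≤ n) (ha : a ≤ n - 3)
    (hy : ∀ b ∈ y, b ≤ n - 2) (hT : ∀ b ∈ T, b ≤ n - 3) :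
    (y ++ (n - 1) :: n :: (n - 2) :: T).countP (dnAdj n a ·) =
      (y ++ (n - 1) :: T).countP (dnAdj (n - 1) a ·) := by
  have hlow : ∀ l : List ℕ, (∀ b ∈ l, b ≤ n - 2) →
      l.countP (dnAdj n a ·) = l.countP (dnAdj (n - 1) a ·) := fun l hl =>
    List.countP_congr fun b hb => by
      simpa using (dnAdj_sub_one_iff_dnAdj (by omega) (by omega) (hl b hb)).symm
  have h1 : ¬ dnAdj n a (n - 1) := by unfold dnAdj; omega
  have h2 : ¬ dnAdj n a n := by unfold dnAdj; omega
  have h3 : dnAdj n a (n - 2) ↔ a = n - 3 := by unfold dnAdj; omega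
  have h4 : dnAdj (n - 1) a (n - 1) ↔ a = n - 3 := by unfold dnAdj; omega
  simp [List.countP_cons, h1, h2, h3, h4, hlow y hy, hlow T fun b hb => (hT b hb).trans (by omega)]

theorem homog_append_insert_iff (hn : 3 ≤ n) {P T : List ℕ} (hP : ∀ a ∈ P, a ≤ n - 2)
    (hT : ∀ a ∈ T, a ≤ n - 3) (hTnd : T.Nodup) :
    Homog (dnAdj n) (P ++ (n - 1) :: n :: (n - 2) :: T) ↔
      Homog (dnAdj (n - 1)) (P ++ (n - 1) :: T) := by
  have hnd : ((n - 1) :: n :: (n - 2) :: T).Nodup := by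
    have h1 : n - 1 ∉ T := fun h => by have := hT _ h; omega
    have h2 : n ∉ T := fun h => by have := hT _ h; omega
    have h3 : n - 2 ∉ T := fun h => by have := hT _ h; omega
    simp [hTnd, h1, h2, h3]
    omega
  rw [homog_append_iff, homog_append_iff,
    homog_congr (adj' := dnAdj (n - 1)) (w := P) fun a ha b hb =>
      (dnAdj_sub_one_iff_dnAdj (by omega) (hP a ha) (hP b hb)).symm]
  simp only [homog_of_nodup hnd,
    homog_of_nodup (List.nodup_cons.mpr ⟨fun h => by have := hT (n - 1) h; omega, hTnd⟩),
    true_and, and_congr_right_iff]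
  intro _
  have hPa : ∀ {x a y}, P = x ++ a :: y → a ≤ n - 2 ∧ ∀ b ∈ y, b ≤ n - 2 := fun hx =>
    ⟨hP _ (by simp [hx]), fun b hb => hP b (by simp [hx, hb])⟩
  constructor
  · intro H x a y y' z hx hy'
    obtain ⟨ha, hy⟩ := hPa hx
    rcases y' with _ | ⟨b, T₁⟩
    · simp only [List.nil_append, List.cons.injEq] at hy'
      omega
    · simp only [List.cons_append, List.cons.injEq] at hy'
      obtain ⟨rfl, rfl⟩ := hy'
      rw [← countP_dnAdj_insert hn (hT a (by simp)) hy fun b hb => hT b (by simp [hb])]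
      exact H x a y _ z hx (by simp)
  · intro H x a y y' z hx hy'
    obtain ⟨ha, hy⟩ := hPa hx
    rcases y' with _ | ⟨b₁, _ | ⟨b₂, _ | ⟨b₃, T₁⟩⟩⟩
    · simp only [List.nil_append, List.cons.injEq] at hy'
      omega
    · simp only [List.cons_append, List.nil_append, List.cons.injEq] at hy'
      omega
    · simp only [List.cons_append, List.nil_append, List.cons.injEq] at hy'
      obtain ⟨rfl, rfl, rfl, -⟩ := hy'
      have h1 : dnAdj n (n - 2) (n - 1) := by unfold dnAdj; omega
      have h2 : dnAdj n (n - 2) n := by unfold dnAdj; omega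
      simp [List.countP_append, h1, h2]
    · simp only [List.cons_append, List.cons.injEq] at hy'
      obtain ⟨rfl, rfl, rfl, rfl⟩ := hy'
      rw [countP_dnAdj_insert hn (hT a (by simp)) hy fun b hb => hT b (by simp [hb])]
      exact H x a y _ z hx rfl

theorem injOn_dropLast_collection (n : ℕ) (suf : List ℕ) (b : ℕ) :
    Set.InjOn List.dropLast (collection n (suf ++ [b])) := by
  rintro _ ⟨i, -, rfl, -⟩ _ ⟨j, -, rfl, -⟩ h
  simp only [← List.append_assoc, List.dropLast_concat] at h ⊢
  rw [h]

theorem image_dropLast_collection (hn : 3 ≤ n) (hk : k ≤ n - 2) :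
    List.dropLast '' collection n (n :: desc (n - 2) k ++ [n - 1]) =
      collection n (n :: desc (n - 2) k) \ {w | ∃ P, w = P ++ (n - 1) :: n :: desc (n - 2) k} := by
  ext w
  constructor
  · rintro ⟨v, ⟨i, hv, rfl, hhom⟩, rfl⟩
    rw [← List.append_assoc] at hhom ⊢
    rw [List.dropLast_concat]
    refine ⟨⟨i, hv, rfl, (homog_append_singleton_iff.mp hhom).1⟩, ?_⟩
    rintro ⟨P, hP⟩
    rw [hP] at hhom
    exact not_homog_append_sub_one hn hk P hhom
  · rintro ⟨⟨i, hv, rfl, hhom⟩, hE⟩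
    refine ⟨_, ⟨i, hv, List.append_assoc _ _ _, ?_⟩, List.dropLast_concat⟩
    rw [prefixWord_eq_append_desc (by omega)] at hhom ⊢
    refine homog_append_sub_one (by omega) hk (fun a ha => ?_)
      (fun hc => hE ⟨prefixWord (n - 1) i, ?_⟩) hhom
    · have := le_of_mem_prefixWord ha
      omega
    · rw [prefixWord_eq_append_desc (by omega), hc, desc_self]
      simp

/-- The map `φ : w₀·[n-1, n-3, …, k] ↦ w₀·[n-1]·[n, n-2, …, k]` from `D_{n-1}`-words to
`Dₙ`-words. -/
def liftWord (n k : ℕ) (w : List ℕ) : List ℕ :=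
  w.rdrop (desc (n - 3) k).length ++ n :: desc (n - 2) k

theorem liftWord_append (n k : ℕ) (P : List ℕ) :
    liftWord n k (P ++ (n - 1) :: desc (n - 3) k) = P ++ (n - 1) :: n :: desc (n - 2) k := by
  rw [liftWord, ← List.singleton_append, ← List.append_assoc, List.rdrop_append_length]
  simp

theorem injOn_liftWord_collection (n k : ℕ) :
    Set.InjOn (liftWord n k) (collection (n - 1) ((n - 1) :: desc (n - 3) k)) := by
  rintro _ ⟨i, -, rfl, -⟩ _ ⟨j, -, rfl, -⟩ h
  rw [liftWord_append, liftWord_append] at h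
  rw [List.append_cancel_right h]

theorem image_liftWord_collection (hn : 3 ≤ n) (hk : k ≤ n - 2) :
    liftWord n k '' collection (n - 1) ((n - 1) :: desc (n - 3) k) =
      collection n (n :: desc (n - 2) k) ∩ {w | ∃ P, w = P ++ (n - 1) :: n :: desc (n - 2) k} := by
  have hins : ∀ i, Homog (dnAdj n) (prefixWord (n - 1) i ++ (n - 1) :: n :: desc (n - 2) k) ↔
      Homog (dnAdj (n - 1)) (prefixWord (n - 1) i ++ (n - 1) :: desc (n - 3) k) := by
    intro i
    rw [desc_eq_cons hk (by omega), show n - 2 - 1 = n - 3 by omega]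
    refine homog_append_insert_iff hn (fun a ha => ?_) (fun a ha => (mem_desc.mp ha).2)
      (nodup_desc _ _)
    have := le_of_mem_prefixWord ha
    omega
  ext w
  constructor
  · rintro ⟨v, ⟨i, hv, rfl, hhom⟩, rfl⟩
    rw [liftWord_append]
    refine ⟨⟨Function.update i (n - 1) (n - 1), validPrefixIdx_update (by omega) hv, ?_,
      (hins i).mpr hhom⟩, _, rfl⟩
    rw [prefixWord_update (by omega)]
    simp
  · rintro ⟨⟨i, hv, rfl, hhom⟩, P, hP⟩
    have hPi : prefixWord (n - 1) i = P := by
      refine prefixWord_sub_one_eq_of_eq_append (by omega) hv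
        (List.append_cancel_right (bs := n :: desc (n - 2) k) ?_)
      simpa using hP
    subst hPi
    rw [hP] at hhom ⊢
    exact ⟨_, ⟨i, fun j hj hjn => hv j hj (by omega), rfl, (hins i).mp hhom⟩,
      liftWord_append _ _ _⟩

end Dn

theorem collection_recursion_general (n k : ℕ) (hn : 4 < n) (hk2 : k ≤ n - 2) :
    Nat.card ↥(collection n (suffixWord n true [k])) =
      Nat.card ↥(collection n (suffixWord n true [k, n - 1])) +
      Nat.card ↥(collection (n - 1) (suffixWord (n - 1) true [k])) := by
  have hn3 : 3 ≤ n := by omega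
  rw [suffixWord_true_pair_sub_one (by omega), suffixWord_true_singleton,
    suffixWord_true_singleton, show n - 1 - 2 = n - 3 by omega]
  simp only [Nat.card_coe_set_eq]
  rw [← Set.ncard_inter_add_ncard_sdiff_eq_ncard _
      {w | ∃ P, w = P ++ (n - 1) :: n :: desc (n - 2) k} (collection_finite _ _),
    ← image_dropLast_collection hn3 hk2, ← image_liftWord_collection hn3 hk2,
    (injOn_dropLast_collection _ _ _).ncard_image, (injOn_liftWord_collection _ _).ncard_image,
    add_comm]

/-- For `n > 4` and `1 ≤ k ≤ n-2`, the size of the type-`Dₙ` collection labeled by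
`[n, n-2, …, k]` equals the size of the type-`Dₙ` collection labeled by
`[n, n-2, …, k, n-1]` plus the size of the type-`D_{n-1}` collection labeled by
`[n-1, n-3, …, k]`; i.e. the collection sizes satisfy the Catalan-triangle recursion. -/
theorem collection_recursion (n k : ℕ) (hn : 4 < n) (hk1 : 1 ≤ k) (hk2 : k ≤ n - 2) :
    Nat.card ↥(collection n (suffixWord n true [k])) =
      Nat.card ↥(collection n (suffixWord n true [k, n - 1])) +
      Nat.card ↥(collection (n - 1) (suffixWord (n - 1) true [k])) :=
  collection_recursion_general n k hn hk2
end
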